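/- arXiv:1802.05037 — 3 statements merged into one kernel-verified Lean document; each statement's English description precedes it below -/
import Mathlib

section
/- The trivial group is the only injective object in the category of groups: if a group G has the property that every group homomorphism φ : H → G extends along every injective group homomorphism ι : H → K to a homomorphism K → G, then G is trivial. -/
/-!
Every group `H` embeds into its holomorph `H ⋊ Aut H`, where each automorphism of `H` becomes
inner. Hence every homomorphism `φ` from `H` into an injective group `G` intertwines each
automorphism `σ` of `H` with an inner automorphism of `G`. For `φ = fst : G × G → G` and `σ` the
swap of the two factors, this says that `1 = φ (σ (g, 1))` is conjugate to `g = φ (g, 1)`.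
-/

universe u

def IsInjectiveGroup (G : Type u) [Group G] : Prop :=
  ∀ (H K : Type u) [Group H] [Group K] (ι : H →* K), Function.Injective ι →
    ∀ φ : H →* G, ∃ φt : K →* G, φt.comp ι = φ

theorem IsInjectiveGroup.exists_conj_map_mulAut {G H : Type u} [Group G] [Group H]
    (hG : IsInjectiveGroup G) (φ : H →* G) (σ : MulAut H) :
    ∃ c : G, ∀ h, φ (σ h) = c * φ h * c⁻¹ := by
  obtain ⟨ψ, hψ⟩ := hG H (H ⋊[MonoidHom.id _] MulAut H) SemidirectProduct.inl
    SemidirectProduct.inl_injective φ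
  refine ⟨ψ (SemidirectProduct.inr σ), fun h => ?_⟩
  have hinner := congrArg ψ (SemidirectProduct.inl_aut (φ := MonoidHom.id _) σ h)
  simpa only [← hψ, MonoidHom.comp_apply, MonoidHom.id_apply, map_mul, map_inv] using hinner

/-- The trivial group is the only injective object in the category of groups: if every
homomorphism into `G` extends along every injective group homomorphism, then `G` is trivial. -/
theorem injective_group_is_trivial (G : Type u) [Group G]
    (hinj : ∀ (H K : Type u) [Group H] [Group K] (ι : H →* K), Function.Injective ι →
      ∀ φ : H →* G, ∃ φt : K →* G, φt.comp ι = φ) :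
    ∀ g : G, g = 1 := by
  intro g
  obtain ⟨c, hc⟩ := IsInjectiveGroup.exists_conj_map_mulAut hinj (MonoidHom.fst G G)
    (MulEquiv.prodComm : G × G ≃* G × G)
  have hconj : 1 = c * g * c⁻¹ := hc (g, 1)
  exact conj_eq_one_iff.mp hconj.symm
end

section
/- Every semiprojective group is a retract of the free product of a finitely presented group and a free group. -/
/-!
`G` is the colimit, along surjections, of the finitely presented quotients `F(G) ⧸ ⟨⟨S⟩⟩` of the
free group on `G`, where `S` runs over the finite subsets of the kernel of `F(G) → G`.
Semiprojectivity lifts `id_G` to one of these quotients. That quotient maps to `P ∗ F(ι)`, where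
`P` is presented on the finitely many letters occurring in `S` and `ι` collects the other letters,
compatibly with the evaluation maps to `G`; so `G` is a retract of `P ∗ F(ι)`.
-/

def IsSemiprojectiveGroup (G : Type) [Group G] : Prop :=
  ∀ (I : Type) (_ : Preorder I) (_ : IsDirected I (· ≤ ·)) (_ : Nonempty I)
      (H : I → Type) (_ : ∀ i, Group (H i))
      (f : ∀ i j, i ≤ j → (H i →* H j)),
      (∀ i (x : H i), f i i le_rfl x = x) →
      (∀ i j k (hij : i ≤ j) (hjk : j ≤ k) (x : H i),
        f j k hjk (f i j hij x) = f i k (hij.trans hjk) x) →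
      (∀ i j (hij : i ≤ j), Function.Surjective (f i j hij)) →
      ∀ (L : Type) (_ : Group L) (π : ∀ i, H i →* L),
        (∀ i j (hij : i ≤ j), (π j).comp (f i j hij) = π i) →
        (∀ x : L, ∃ i y, π i y = x) →
        (∀ i (x : H i), π i x = 1 → ∃ j, ∃ hij : i ≤ j, f i j hij x = 1) →
        ∀ φ : G →* L, ∃ (i : I) (φt : G →* H i), (π i).comp φt = φ

namespace MonoidHom

variable {F G : Type} [Group F] [Group G] (φ : F →* G)

def finiteKerClosure (S : Finset φ.ker) : Subgroup F :=
  Subgroup.normalClosure (Subtype.val '' (S : Set φ.ker))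

instance (S : Finset φ.ker) : (φ.finiteKerClosure S).Normal :=
  Subgroup.normalClosure_normal

theorem finiteKerClosure_mono : Monotone φ.finiteKerClosure := fun _ _ h =>
  Subgroup.normalClosure_mono (Set.image_mono h)

theorem finiteKerClosure_le_ker (S : Finset φ.ker) : φ.finiteKerClosure S ≤ φ.ker :=
  Subgroup.normalClosure_le_normal (Set.image_subset_iff.2 fun x _ => x.2)

def finiteKerQuotientMap {S T : Finset φ.ker} (h : S ≤ T) :
    F ⧸ φ.finiteKerClosure S →* F ⧸ φ.finiteKerClosure T :=
  QuotientGroup.map _ _ (.id F) (φ.finiteKerClosure_mono h)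

def finiteKerQuotientLift (S : Finset φ.ker) : F ⧸ φ.finiteKerClosure S →* G :=
  QuotientGroup.lift _ φ (φ.finiteKerClosure_le_ker S)

@[simp]
theorem finiteKerQuotientMap_mk {S T : Finset φ.ker} (h : S ≤ T) (x : F) :
    φ.finiteKerQuotientMap h x = x := rfl

@[simp]
theorem finiteKerQuotientLift_mk (S : Finset φ.ker) (x : F) :
    φ.finiteKerQuotientLift S x = φ x := rfl

theorem exists_finiteKerQuotientMap_eq_one {S : Finset φ.ker} {x : F ⧸ φ.finiteKerClosure S}
    (hx : φ.finiteKerQuotientLift S x = 1) :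
    ∃ T, ∃ h : S ≤ T, φ.finiteKerQuotientMap h x = 1 := by
  classical
  induction x using QuotientGroup.induction_on with | H x =>
  refine ⟨insert ⟨x, hx⟩ S, Finset.subset_insert _ _, (QuotientGroup.eq_one_iff _).2 ?_⟩
  exact Subgroup.subset_normalClosure ⟨⟨x, hx⟩, Finset.mem_insert_self _ _, rfl⟩

end MonoidHom

namespace IsSemiprojectiveGroup

variable {F G : Type} [Group F] [Group G]

theorem exists_section_finiteKerQuotientLift (hG : IsSemiprojectiveGroup G) (φ : F →* G)
    (hφ : Function.Surjective φ) :
    ∃ (S : Finset φ.ker) (σ : G →* F ⧸ φ.finiteKerClosure S),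
      (φ.finiteKerQuotientLift S).comp σ = .id G := by
  refine hG _ inferInstance inferInstance ⟨∅⟩ _ (fun _ => inferInstance)
    (fun _ _ => φ.finiteKerQuotientMap) ?_ ?_ ?_ G inferInstance φ.finiteKerQuotientLift ?_ ?_
    (fun _ _ => φ.exists_finiteKerQuotientMap_eq_one) (.id G)
  · intro S x
    induction x using QuotientGroup.induction_on
    simp
  · intro S T U _ _ x
    induction x using QuotientGroup.induction_on
    simp
  · intro S T h x
    induction x using QuotientGroup.induction_on with | H x =>
    exact ⟨x, φ.finiteKerQuotientMap_mk h x⟩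
  · intro S T h
    refine QuotientGroup.monoidHom_ext _ (MonoidHom.ext fun x => ?_)
    simp
  · intro g
    obtain ⟨x, rfl⟩ := hφ g
    exact ⟨∅, x, φ.finiteKerQuotientLift_mk ∅ x⟩

theorem exists_retraction (hG : IsSemiprojectiveGroup G) (φ : F →* G)
    (hφ : Function.Surjective φ) :
    ∃ S : Finset F, (∀ r ∈ S, φ r = 1) ∧ ∀ (M : Type) [Group M] (ψ : F →* M) (β : M →* G),
      (∀ r ∈ S, ψ r = 1) → β.comp ψ = φ → ∃ α : G →* M, β.comp α = .id G := by
  obtain ⟨S, σ, hσ⟩ := hG.exists_section_finiteKerQuotientLift φ hφ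
  refine ⟨S.map (Function.Embedding.subtype _), fun r hr => ?_, fun M _ ψ β hψ hβ => ?_⟩
  · obtain ⟨r, -, rfl⟩ := Finset.mem_map.1 hr
    exact r.2
  have hN : φ.finiteKerClosure S ≤ ψ.ker :=
    Subgroup.normalClosure_le_normal fun _ ⟨r, hr, hx⟩ => hx ▸ hψ r (by simpa using hr)
  refine ⟨(QuotientGroup.lift _ ψ hN).comp σ, ?_⟩
  have hlift : β.comp (QuotientGroup.lift _ ψ hN) = φ.finiteKerQuotientLift S :=
    QuotientGroup.monoidHom_ext _ (MonoidHom.ext fun x => by simp [← hβ])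
  rw [← hσ, ← MonoidHom.comp_assoc, hlift]

end IsSemiprojectiveGroup

theorem FreeGroup.hom_apply_eq_of_forall_mem_toWord {α M : Type*} [DecidableEq α] [Group M]
    {f g : FreeGroup α →* M} {x : FreeGroup α}
    (h : ∀ p ∈ x.toWord, f (of p.1) = g (of p.1)) : f x = g x := by
  rw [← mk_toWord (x := x), lift_unique f (f := fun a => f (of a)) fun _ => rfl,
    lift_unique g (f := fun a => g (of a)) fun _ => rfl, lift_mk, lift_mk]
  exact congrArg List.prod (List.map_congr_left fun p hp => by rw [h p hp])

open Monoid in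
theorem FreeGroup.exists_factor_coprod_presentedGroup_freeGroup {X M : Type} [Group M]
    (S : Finset (FreeGroup X)) (φ : FreeGroup X →* M) (hS : ∀ r ∈ S, φ r = 1) :
    ∃ (n : ℕ) (rels : Finset (FreeGroup (Fin n))) (ι : Type)
      (ψ : FreeGroup X →* Coprod (PresentedGroup (rels : Set (FreeGroup (Fin n)))) (FreeGroup ι))
      (β : Coprod (PresentedGroup (rels : Set (FreeGroup (Fin n)))) (FreeGroup ι) →* M),
      (∀ r ∈ S, ψ r = 1) ∧ β.comp ψ = φ := by
  classical
  let T : Finset X := S.biUnion fun r => (r.toWord.map Prod.fst).toFinset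
  have letter_mem_T : ∀ r ∈ S, ∀ p ∈ r.toWord, p.1 ∈ T := fun r hr p hp =>
    Finset.mem_biUnion.2 ⟨r, hr, List.mem_toFinset.2 (List.mem_map_of_mem hp)⟩
  let e : T ≃ Fin T.card := T.equivFin
  let ρ : FreeGroup X →* FreeGroup (Fin T.card) :=
    lift fun x => if hx : x ∈ T then of (e ⟨x, hx⟩) else 1
  let rels : Finset (FreeGroup (Fin T.card)) := S.image ρ
  let ψ : FreeGroup X →* Coprod (PresentedGroup (rels : Set _)) (FreeGroup {x // x ∉ T}) :=
    lift fun x => if hx : x ∈ T then Coprod.inl (PresentedGroup.of (e ⟨x, hx⟩))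
      else Coprod.inr (of ⟨x, hx⟩)
  -- A relator only involves letters of `T`, on which `ψ` factors through `ρ`.
  have ψ_eq : ∀ r ∈ S, ψ r = Coprod.inl (PresentedGroup.mk _ (ρ r)) := fun r hr =>
    hom_apply_eq_of_forall_mem_toWord
      (f := ψ) (g := (Coprod.inl.comp (PresentedGroup.mk _)).comp ρ)
      fun p hp => by simp [ψ, ρ, letter_mem_T r hr p hp, PresentedGroup.of]
  let φT : FreeGroup (Fin T.card) →* M := lift fun k => φ (of (e.symm k))
  have φT_rels : ∀ r ∈ (rels : Set (FreeGroup (Fin T.card))), φT r = 1 := by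
    simp only [rels, Finset.coe_image, Set.forall_mem_image]
    intro r hr
    rw [← hS r hr]
    exact hom_apply_eq_of_forall_mem_toWord (f := φT.comp ρ) (g := φ)
      fun p hp => by simp [φT, ρ, letter_mem_T r hr p hp]
  refine ⟨T.card, rels, {x // x ∉ T}, ψ,
    Coprod.lift (PresentedGroup.toGroup φT_rels) (lift fun x => φ (of x.1)), fun r hr => ?_, ?_⟩
  · rw [ψ_eq r hr, PresentedGroup.one_of_mem (Finset.mem_coe.2 (Finset.mem_image_of_mem ρ hr)),
      _root_.map_one]
  · ext x
    by_cases hx : x ∈ T <;> simp [ψ, hx]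

/-- Every semiprojective group is a retract of the free product of a finitely presented
group and a free group.  Here `G` is semiprojective if for every directed system of groups
with surjective connecting homomorphisms and directed colimit `L`, every homomorphism
`G →* L` factors through some group of the system. -/
theorem semiprojective_group_retract_of_fp_free_product (G : Type) [Group G]
    (hsp : ∀ (I : Type) (_ : Preorder I) (_ : IsDirected I (· ≤ ·)) (_ : Nonempty I)
      (H : I → Type) (instH : ∀ i, Group (H i))
      (f : ∀ i j, i ≤ j → (H i →* H j)),
      (∀ i (x : H i), f i i le_rfl x = x) →
      (∀ i j k (hij : i ≤ j) (hjk : j ≤ k) (x : H i),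
        f j k hjk (f i j hij x) = f i k (hij.trans hjk) x) →
      (∀ i j (hij : i ≤ j), Function.Surjective (f i j hij)) →
      ∀ (L : Type) (_ : Group L) (π : ∀ i, H i →* L),
        (∀ i j (hij : i ≤ j), (π j).comp (f i j hij) = π i) →
        (∀ x : L, ∃ i y, π i y = x) →
        (∀ i (x : H i), π i x = 1 → ∃ j, ∃ hij : i ≤ j, f i j hij x = 1) →
        ∀ φ : G →* L, ∃ (i : I) (φt : G →* H i), (π i).comp φt = φ) :
    ∃ (n : ℕ) (rels : Finset (FreeGroup (Fin n))) (ι : Type)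
      (α : G →* Monoid.Coprod (PresentedGroup (rels : Set (FreeGroup (Fin n)))) (FreeGroup ι))
      (β : Monoid.Coprod (PresentedGroup (rels : Set (FreeGroup (Fin n)))) (FreeGroup ι) →* G),
      β.comp α = MonoidHom.id G := by
  obtain ⟨S, hS, retract⟩ := IsSemiprojectiveGroup.exists_retraction hsp (FreeGroup.lift id)
    fun g => ⟨FreeGroup.of g, FreeGroup.lift_apply_of⟩
  obtain ⟨n, rels, ι, ψ, β, hψ, hβ⟩ :=
    FreeGroup.exists_factor_coprod_presentedGroup_freeGroup S _ hS
  obtain ⟨α, hα⟩ := retract _ ψ β hψ hβ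
  exact ⟨n, rels, ι, α, β, hα⟩
end

section
/- Every semiinjective group is trivial: if a group G has the property that for every inverse system of groups with injective connecting homomorphisms, every homomorphism from the inverse limit to G partially extends to one of the groups in the system, then G = {1}. -/
namespace SemiinjAux

/-! ## The wreath-product trick

We work in the free group `F = F(x,y)` on two generators.  Let `σ : F →* Multiplicative ℤ`
be the exponent sum of `y`.  The subgroups `K i = σ⁻¹(2^i ℤ)` form a decreasing chain whose
intersection is `ker σ`, giving an inverse system (indexed by `ℕᵒᵈ`) with inverse limit
`ker σ`.  A homomorphism `φ : ker σ →* G` sending `x ↦ g` and `yᵐ x y⁻ᵐ ↦ 1` for `m ≠ 0`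
is constructed via the semidirect product `(ℤ → G) ⋊ Multiplicative ℤ`.  An extension of
`φ` to some `K i` conjugates `g` to `1`, forcing `g = 1`. -/

/-- The shift automorphism of `ℤ → G`. -/
def tau (G : Type) [Group G] (m : ℤ) : (ℤ → G) ≃* (ℤ → G) where
  toFun c := fun k => c (k + m)
  invFun c := fun k => c (k - m)
  left_inv c := by funext k; simp
  right_inv c := by funext k; simp
  map_mul' c d := rfl

/-- The shift action of `Multiplicative ℤ` on `ℤ → G`. -/
def act (G : Type) [Group G] : Multiplicative ℤ →* MulAut (ℤ → G) where
  toFun m := tau G (Multiplicative.toAdd m)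
  map_one' := by
    ext c k
    simp [tau]
  map_mul' m n := by
    ext c k
    simp [tau, add_assoc]

abbrev W (G : Type) [Group G] := (ℤ → G) ⋊[act G] Multiplicative ℤ

abbrev F := FreeGroup Bool

def xx : F := FreeGroup.of false
def yy : F := FreeGroup.of true

/-- `x ↦ (δ₀ g, 0)`, `y ↦ (1, 1)`. -/
def Phi {G : Type} [Group G] (g : G) : F →* W G :=
  FreeGroup.lift (fun b =>
    if b then SemidirectProduct.inr (Multiplicative.ofAdd 1)
    else SemidirectProduct.inl (fun k => if k = 0 then g else 1))

/-- The exponent sum of `y`. -/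
def sigma : F →* Multiplicative ℤ :=
  FreeGroup.lift (fun b => if b then Multiplicative.ofAdd 1 else 1)

lemma rightHom_Phi {G : Type} [Group G] (g : G) :
    SemidirectProduct.rightHom.comp (Phi g) = sigma := by
  apply FreeGroup.ext_hom
  intro a
  cases a <;> simp [Phi, sigma]

lemma rightHom_Phi_apply {G : Type} [Group G] (g : G) (w : F) :
    (Phi g w).right = sigma w := by
  have := congrArg (fun h => h w) (rightHom_Phi g)
  simpa [SemidirectProduct.rightHom] using this

/-- `K i = σ⁻¹(2^i ℤ)`. -/
def K (i : ℕ) : Subgroup F :=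
  Subgroup.comap sigma (Subgroup.zpowers (Multiplicative.ofAdd (2 ^ i : ℤ)))

lemma mem_K {w : F} {i : ℕ} : w ∈ K i ↔ (2 ^ i : ℤ) ∣ Multiplicative.toAdd (sigma w) := by
  simp only [K, Subgroup.mem_comap, Subgroup.mem_zpowers_iff]
  constructor
  · rintro ⟨k, hk⟩
    exact ⟨k, by rw [← hk, toAdd_zpow, toAdd_ofAdd, smul_eq_mul]; ring⟩
  · rintro ⟨k, hk⟩
    exact ⟨k, Multiplicative.toAdd.injective
      (by rw [toAdd_zpow, toAdd_ofAdd, smul_eq_mul, hk]; ring)⟩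

lemma K_mono {i j : ℕ} (h : j ≤ i) : K i ≤ K j := by
  intro w hw
  rw [mem_K] at hw ⊢
  exact dvd_trans (pow_dvd_pow 2 h) hw

lemma ker_le_K (i : ℕ) : MonoidHom.ker sigma ≤ K i := by
  intro w hw
  rw [MonoidHom.mem_ker] at hw
  rw [mem_K, hw]
  simp

lemma mem_ker_of_forall {w : F} (h : ∀ i, w ∈ K i) : w ∈ MonoidHom.ker sigma := by
  rw [MonoidHom.mem_ker]
  have hd : ∀ i : ℕ, (2 ^ i : ℤ) ∣ Multiplicative.toAdd (sigma w) := fun i => mem_K.mp (h i)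
  set n : ℤ := Multiplicative.toAdd (sigma w) with hn
  have hn0 : n = 0 := by
    by_contra hne
    obtain ⟨i, hi⟩ : ∃ i : ℕ, |n| < 2 ^ i := pow_unbounded_of_one_lt _ (by norm_num)
    have h1 : (2 ^ i : ℤ) ≤ |n| := Int.le_of_dvd (abs_pos.mpr hne) ((dvd_abs _ _).mpr (hd i))
    linarith
  apply Multiplicative.toAdd.injective
  rw [toAdd_one]; exact hn0

/-- The limit homomorphism `φ : ker σ →* G`, `w ↦ (Φ w).left 0`. -/
def phi {G : Type} [Group G] (g : G) : ↥(MonoidHom.ker sigma) →* G where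
  toFun z := (Phi g z.1).left 0
  map_one' := by simp
  map_mul' z₁ z₂ := by
    have h1 : (Phi g z₁.1).right = 1 := by
      rw [rightHom_Phi_apply]; exact z₁.2
    have h2 : (Phi g (z₁.1 * z₂.1)).left = (Phi g z₁.1).left * (Phi g z₂.1).left := by
      rw [map_mul, SemidirectProduct.mul_left, h1, map_one]
      rfl
    show (Phi g ((z₁ * z₂ : ↥(MonoidHom.ker sigma)) : F)).left 0 = _
    have hco : ((z₁ * z₂ : ↥(MonoidHom.ker sigma)) : F) = z₁.1 * z₂.1 := rfl
    rw [hco, h2]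
    rfl

lemma sigma_yy : sigma yy = Multiplicative.ofAdd 1 := by simp [sigma, yy]

lemma sigma_xx : sigma xx = 1 := by simp [sigma, xx]

lemma xx_mem_ker : xx ∈ MonoidHom.ker sigma := by
  rw [MonoidHom.mem_ker, sigma_xx]

lemma conj_mem_ker (m : ℤ) : yy ^ m * xx * (yy ^ m)⁻¹ ∈ MonoidHom.ker sigma := by
  rw [MonoidHom.mem_ker]
  rw [map_mul, map_mul, map_inv, map_zpow, sigma_xx, sigma_yy]
  group

lemma yy_pow_mem_K (i : ℕ) : yy ^ (2 ^ i : ℤ) ∈ K i := by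
  rw [mem_K, map_zpow, sigma_yy, toAdd_zpow, toAdd_ofAdd]
  simp

lemma Phi_xx {G : Type} [Group G] (g : G) :
    Phi g xx = SemidirectProduct.inl (fun k => if k = 0 then g else 1) := by
  simp [Phi, xx]

lemma Phi_yy_pow {G : Type} [Group G] (g : G) (m : ℤ) :
    Phi g (yy ^ m) = SemidirectProduct.inr (Multiplicative.ofAdd m) := by
  rw [map_zpow]
  have : Phi g yy = SemidirectProduct.inr (Multiplicative.ofAdd 1) := by simp [Phi, yy]
  rw [this, ← map_zpow]
  congr 1
  apply Multiplicative.toAdd.injective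
  rw [toAdd_zpow, toAdd_ofAdd, toAdd_ofAdd, smul_eq_mul, mul_one]

lemma phi_xx {G : Type} [Group G] (g : G) : phi g ⟨xx, xx_mem_ker⟩ = g := by
  show (Phi g xx).left 0 = g
  rw [Phi_xx, SemidirectProduct.left_inl]
  simp

lemma phi_conj {G : Type} [Group G] (g : G) (m : ℤ) (hm : m ≠ 0) :
    phi g ⟨yy ^ m * xx * (yy ^ m)⁻¹, conj_mem_ker m⟩ = 1 := by
  show (Phi g (yy ^ m * xx * (yy ^ m)⁻¹)).left 0 = 1
  have key : Phi g (yy ^ m * xx * (yy ^ m)⁻¹)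
      = SemidirectProduct.inl (act G (Multiplicative.ofAdd m) (fun k => if k = 0 then g else 1)) := by
    rw [map_mul, map_mul, map_inv, Phi_xx, Phi_yy_pow, SemidirectProduct.inl_aut]
    rw [map_inv]
  rw [key, SemidirectProduct.left_inl]
  show (if (0 : ℤ) + m = 0 then g else 1) = 1
  simp [hm]

end SemiinjAux

open SemiinjAux in
/-- Every semiinjective group is trivial.  Here `G` is semiinjective if for every inverse
system of groups, indexed by a downward-directed partially ordered set and with injective
connecting homomorphisms, and every inverse limit `L` of the system, every homomorphism
`L →* G` extends to one of the groups of the system. -/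
theorem semiinjective_group_is_trivial (G : Type) [Group G]
    (hsi : ∀ (I : Type) (_ : Preorder I) (_ : IsDirected I (· ≥ ·)) (_ : Nonempty I)
      (H : I → Type) (instH : ∀ i, Group (H i))
      -- connecting monomorphisms `H i →* H j` for `i ≤ j`
      (f : ∀ i j, i ≤ j → (H i →* H j)),
      (∀ i (x : H i), f i i le_rfl x = x) →
      (∀ i j k (hij : i ≤ j) (hjk : j ≤ k) (x : H i),
        f j k hjk (f i j hij x) = f i k (hij.trans hjk) x) →
      (∀ i j (hij : i ≤ j), Function.Injective (f i j hij)) →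
      -- an inverse limit `L` with compatible maps `p i : L →* H i` ...
      ∀ (L : Type) (_ : Group L) (p : ∀ i, L →* H i),
        (∀ i j (hij : i ≤ j), (f i j hij).comp (p i) = p j) →
        -- ... satisfying the universal property of the inverse limit
        (∀ (T : Type) (_ : Group T) (t : ∀ i, T →* H i),
          (∀ i j (hij : i ≤ j), (f i j hij).comp (t i) = t j) →
          ∃! u : T →* L, ∀ i, (p i).comp u = t i) →
        ∀ φ : L →* G, ∃ (i : I) (φt : H i →* G), φt.comp (p i) = φ) :
    ∀ g : G, g = 1 := by
  intro g
  -- instantiate the hypothesis with the system `K i = σ⁻¹(2^i ℤ)` over `ℕᵒᵈ`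
  have key := hsi ℕᵒᵈ inferInstance inferInstance ⟨OrderDual.toDual 0⟩
    (fun i => ↥(K (OrderDual.ofDual i))) (fun i => inferInstance)
    (fun i j hij => Subgroup.inclusion (K_mono hij))
    (fun i x => rfl)
    (fun i j k hij hjk x => rfl)
    (fun i j hij => Subgroup.inclusion_injective _)
    ↥(MonoidHom.ker sigma) inferInstance
    (fun i => Subgroup.inclusion (ker_le_K _))
    (fun i j hij => rfl)
    ?_ (phi g)
  · obtain ⟨i, φt, hext⟩ := key
    set m : ℤ := 2 ^ (OrderDual.ofDual i) with hm
    have hmne : m ≠ 0 := by positivity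
    -- the three relevant elements of `K i`
    set a : ↥(MonoidHom.ker sigma) := ⟨xx, xx_mem_ker⟩ with ha
    set b : ↥(MonoidHom.ker sigma) := ⟨yy ^ m * xx * (yy ^ m)⁻¹, conj_mem_ker m⟩ with hb
    set tK : ↥(K (OrderDual.ofDual i)) := ⟨yy ^ m, yy_pow_mem_K _⟩ with htK
    have hrel : Subgroup.inclusion (ker_le_K _) b = tK * Subgroup.inclusion (ker_le_K _) a * tK⁻¹ := by
      apply Subtype.ext
      rfl
    have h1 : φt (Subgroup.inclusion (ker_le_K _) a) = g := by
      have := congrArg (fun h => h a) hext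
      simpa using this.trans (phi_xx g)
    have h2 : φt (Subgroup.inclusion (ker_le_K _) b) = 1 := by
      have := congrArg (fun h => h b) hext
      simpa using this.trans (phi_conj g m hmne)
    rw [hrel, map_mul, map_mul, map_inv, h1] at h2
    -- `1 = c * g * c⁻¹` forces `g = 1`
    have := congrArg (fun x => (φt tK)⁻¹ * x * φt tK) h2
    simpa [mul_assoc] using this
  · -- the universal property of the inverse limit `ker σ`
    intro T instT t hcompat
    have hagree : ∀ (z : T) (i : ℕᵒᵈ), ((t i z : ↥(K (OrderDual.ofDual i))) : F)
        = ((t (OrderDual.toDual 0) z : ↥(K 0)) : F) := by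
      intro z i
      have hle : i ≤ OrderDual.toDual 0 := by
        show (0 : ℕ) ≤ OrderDual.ofDual i
        exact Nat.zero_le _
      have := congrArg (fun h => h z) (hcompat i (OrderDual.toDual 0) hle)
      simp only [MonoidHom.comp_apply] at this
      rw [← this]
      rfl
    have hker : ∀ z : T, ((t (OrderDual.toDual 0) z : ↥(K 0)) : F) ∈ MonoidHom.ker sigma := by
      intro z
      apply mem_ker_of_forall
      intro i
      rw [← hagree z (OrderDual.toDual i)]
      exact (t (OrderDual.toDual i) z).2
    refine ⟨{ toFun := fun z => ⟨((t (OrderDual.toDual 0) z : ↥(K 0)) : F), hker z⟩,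
              map_one' := by apply Subtype.ext; have h := congrArg Subtype.val (map_one (t (OrderDual.toDual 0))); exact h, map_mul' := by intro z₁ z₂; apply Subtype.ext; have h := congrArg Subtype.val (map_mul (t (OrderDual.toDual 0)) z₁ z₂); exact h }, ?_, ?_⟩
    · intro i
      ext z
      show ((Subgroup.inclusion (ker_le_K (OrderDual.ofDual i))
          (⟨((t (OrderDual.toDual 0) z : ↥(K 0)) : F), hker z⟩ : ↥(MonoidHom.ker sigma))
            : ↥(K (OrderDual.ofDual i))) : F) = ((t i z : ↥(K (OrderDual.ofDual i))) : F)
      rw [Subgroup.coe_inclusion]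
      exact (hagree z i).symm
    · intro u' hu'
      ext z
      have h0 := congrArg (fun h => h z) (hu' (OrderDual.toDual 0))
      simp only [MonoidHom.comp_apply] at h0
      have h0' : ((u' z : ↥(MonoidHom.ker sigma)) : F) = ((t (OrderDual.toDual 0) z : ↥(K 0)) : F) := by
        rw [← h0]
        exact (Subgroup.coe_inclusion _ _).symm
      exact h0'
end
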